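/- arXiv:2105.12037 — 5 statements merged into one kernel-verified Lean document; each statement's English description precedes it below -/
import Mathlib

section
/- For a set K of gambles, the natural extension E(K) := posi(K ∪ L⁺) is coherent if and only if 0 ∉ E(K). -/
/-- A gamble is a bounded function. -/
def Bdd {Ω : Type*} (f : Ω → ℝ) : Prop := ∃ M : ℝ, ∀ ω, |f ω| ≤ M

/-- The set of all gambles (bounded functions) on `Ω`. -/
def L (Ω : Type*) : Set (Ω → ℝ) := {f | Bdd f}

/-- Nonnegative, nonzero gambles. -/
def Lpos (Ω : Type*) : Set (Ω → ℝ) := {f | Bdd f ∧ 0 ≤ f ∧ f ≠ 0}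

/-- Coherent set of desirable gambles. -/
def Coherent {Ω : Type*} (D : Set (Ω → ℝ)) : Prop :=
  D ⊆ L Ω ∧ Lpos Ω ⊆ D ∧ (0 : Ω → ℝ) ∉ D ∧
  (∀ f g : Ω → ℝ, f ∈ D → g ∈ D → f + g ∈ D) ∧
  (∀ (c : ℝ) (f : Ω → ℝ), f ∈ D → 0 < c → c • f ∈ D)

/-- `Φ(Ω)`: coherent sets together with the set of all gambles. -/
def Phi (Ω : Type*) : Set (Set (Ω → ℝ)) := {D | Coherent D} ∪ {L Ω}

/-- Closure operator associated to the topped ∩-structure `Φ`. -/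
def Cl {Ω : Type*} (A : Set (Ω → ℝ)) : Set (Ω → ℝ) :=
  ⋂₀ {D | D ∈ Phi Ω ∧ A ⊆ D}

/-- Finite positive linear combinations. -/
def posi {Ω : Type*} (K : Set (Ω → ℝ)) : Set (Ω → ℝ) :=
  {f | ∃ (r : ℕ) (g : Fin (r + 1) → Ω → ℝ) (c : Fin (r + 1) → ℝ),
    (∀ j, g j ∈ K) ∧ (∀ j, 0 < c j) ∧ f = ∑ j, c j • g j}

/-- Natural extension `E(K) := posi(K ∪ L⁺)`. -/
def natExt {Ω : Type*} (K : Set (Ω → ℝ)) : Set (Ω → ℝ) := posi (K ∪ Lpos Ω)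

section

variable {Ω : Type*}

lemma Bdd.add {f g : Ω → ℝ} (hf : Bdd f) (hg : Bdd g) : Bdd (f + g) := by
  obtain ⟨M, hM⟩ := hf
  obtain ⟨N, hN⟩ := hg
  exact ⟨M + N, fun ω => (abs_add_le _ _).trans (add_le_add (hM ω) (hN ω))⟩

lemma Bdd.const_smul {f : Ω → ℝ} (c : ℝ) (hf : Bdd f) : Bdd (c • f) := by
  obtain ⟨M, hM⟩ := hf
  refine ⟨|c| * M, fun ω => ?_⟩
  rw [Pi.smul_apply, smul_eq_mul, abs_mul]
  exact mul_le_mul_of_nonneg_left (hM ω) (abs_nonneg c)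

lemma Bdd.zero : Bdd (0 : Ω → ℝ) := ⟨0, by simp⟩

lemma Bdd.sum {ι : Type*} (s : Finset ι) {f : ι → Ω → ℝ} (hf : ∀ i ∈ s, Bdd (f i)) :
    Bdd (∑ i ∈ s, f i) :=
  Finset.sum_induction f Bdd (fun _ _ => Bdd.add) Bdd.zero hf

lemma Lpos_subset_L : Lpos Ω ⊆ L Ω := fun _ hf => hf.1

lemma sum_smul_mem_posi {K : Set (Ω → ℝ)} {n : ℕ} [NeZero n] {g : Fin n → Ω → ℝ}
    {c : Fin n → ℝ} (hg : ∀ j, g j ∈ K) (hc : ∀ j, 0 < c j) :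
    ∑ j, c j • g j ∈ posi K := by
  obtain ⟨r, rfl⟩ := Nat.exists_eq_succ_of_ne_zero (NeZero.ne n)
  exact ⟨r, g, c, hg, hc, rfl⟩

lemma subset_posi (K : Set (Ω → ℝ)) : K ⊆ posi K :=
  fun f hf => ⟨0, fun _ => f, fun _ => 1, fun _ => hf, fun _ => one_pos, by simp⟩

lemma posi_subset_L {K : Set (Ω → ℝ)} (hK : K ⊆ L Ω) : posi K ⊆ L Ω := by
  rintro f ⟨r, g, c, hg, -, rfl⟩
  exact Bdd.sum _ fun j _ => (hK (hg j)).const_smul (c j)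

lemma add_mem_posi {K : Set (Ω → ℝ)} {f g : Ω → ℝ} (hf : f ∈ posi K) (hg : g ∈ posi K) :
    f + g ∈ posi K := by
  obtain ⟨r, f', a, hf', ha, rfl⟩ := hf
  obtain ⟨s, g', b, hg', hb, rfl⟩ := hg
  have hmem : ∀ j, Fin.append f' g' j ∈ K := Fin.addCases (by simpa using hf') (by simpa using hg')
  have hpos : ∀ j, 0 < Fin.append a b j := Fin.addCases (by simpa using ha) (by simpa using hb)
  simpa [Fin.sum_univ_add] using sum_smul_mem_posi hmem hpos

lemma smul_mem_posi {K : Set (Ω → ℝ)} {f : Ω → ℝ} {c : ℝ} (hf : f ∈ posi K) (hc : 0 < c) :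
    c • f ∈ posi K := by
  obtain ⟨r, g, a, hg, ha, rfl⟩ := hf
  refine ⟨r, g, fun j => c * a j, hg, fun j => mul_pos hc (ha j), ?_⟩
  simp only [Finset.smul_sum, smul_smul]

end

/-- The natural extension `E(K)` is coherent iff `0 ∉ E(K)`. -/
theorem stmt1 {Ω : Type*} (K : Set (Ω → ℝ)) (hK : K ⊆ L Ω) :
    Coherent (natExt K) ↔ (0 : Ω → ℝ) ∉ natExt K := by
  refine ⟨fun h => h.2.2.1, fun h0 => ⟨?_, ?_, h0, fun _ _ => add_mem_posi,
    fun _ _ hf hc => smul_mem_posi hf hc⟩⟩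
  · exact posi_subset_L (Set.union_subset hK Lpos_subset_L)
  · exact Set.subset_union_right.trans (subset_posi _)
end

section
/- If the equivalence relations ≡_x and ≡_y on Ω commute (i.e., ≡_x ⋆ ≡_y = ≡_y ⋆ ≡_x), then L_x ∩ L_y = L_{x∧y}, where L_{x∧y} is the space of gambles measurable with respect to the equivalence relation ≡_x ⋆ ≡_y. -/
/-- `f` is `x`-measurable: constant on blocks of the partition of `x`. -/
def Meas {Ω : Type*} (x : Setoid Ω) (f : Ω → ℝ) : Prop :=
  ∀ a b : Ω, x.r a b → f a = f b

/-- `L_x`: the linear space of `x`-measurable gambles. -/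
def Lx {Ω : Type*} (x : Setoid Ω) : Set (Ω → ℝ) := {f | Bdd f ∧ Meas x f}

/-- Relational composition `≡_x ⋆ ≡_y`. -/
def starComp {Ω : Type*} (x y : Setoid Ω) : Ω → Ω → Prop :=
  fun a c => ∃ b, x.r a b ∧ y.r b c

/-- Measurability with respect to a relation. -/
def MeasR {Ω : Type*} (r : Ω → Ω → Prop) (f : Ω → ℝ) : Prop :=
  ∀ a b : Ω, r a b → f a = f b

/-- If `≡_x` and `≡_y` commute, then `L_x ∩ L_y = L_{x∧y}`, the space of
gambles measurable w.r.t. `≡_x ⋆ ≡_y`. -/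
theorem stmt8 {Ω : Type*} (x y : Setoid Ω)
    (h : starComp x y = starComp y x) :
    Lx x ∩ Lx y = {f | Bdd f ∧ MeasR (starComp x y) f} := by
  ext f
  constructor
  · rintro ⟨⟨hb, hx⟩, ⟨-, hy⟩⟩
    exact ⟨hb, fun a b ⟨c, hac, hcb⟩ => (hx a c hac).trans (hy c b hcb)⟩
  · rintro ⟨hb, hm⟩
    refine ⟨⟨hb, fun a b hab => hm a b ⟨b, hab, y.refl b⟩⟩,
      ⟨hb, fun a b hab => hm a b ?_⟩⟩
    rw [h]
    exact ⟨b, hab, x.refl b⟩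
end

section
/- The conditional independence relation on partitions, P₁ ⊥ P₂ | P (meaning: for every block B of P, blocks B₁ of P₁ and B₂ of P₂, if B₁ ∩ B ≠ ∅ and B₂ ∩ B ≠ ∅ then B₁ ∩ B₂ ∩ B ≠ ∅), satisfies the quasi-separoid axioms: (C1) P₁ ⊥ P₂ | P₂; (C2) symmetry: P₁ ⊥ P₂ | P implies P₂ ⊥ P₁ | P; (C3) P₁ ⊥ P₂ | P and P' ≤ P₂ imply P₁ ⊥ P' | P; (C4) P₁ ⊥ P₂ | P implies P₁ ⊥ (P₂ ∨ P) | P. -/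
/-- Join of partitions: blocks are nonempty intersections of blocks,
i.e. the intersection of the associated equivalence relations. -/
def pjoin {Ω : Type*} (x y : Setoid Ω) : Setoid Ω :=
  ⟨fun a b => x.r a b ∧ y.r a b,
   ⟨fun a => ⟨x.iseqv.refl a, y.iseqv.refl a⟩,
    fun h => ⟨x.iseqv.symm h.1, y.iseqv.symm h.2⟩,
    fun h h' => ⟨x.iseqv.trans h.1 h'.1, y.iseqv.trans h.2 h'.2⟩⟩⟩

/-- Conditional independence `P₁ ⊥ P₂ | P` of partitions (blocks condition):
if a block of `P₁` and a block of `P₂` both meet a block of `P`, then all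
three blocks have a common point. Blocks are equivalence classes. -/
def CondIndep {Ω : Type*} (p q t : Setoid Ω) : Prop :=
  ∀ ω₁ ω₂ ω : Ω,
    (∃ u, p.r ω₁ u ∧ t.r ω u) → (∃ v, q.r ω₂ v ∧ t.r ω v) →
    ∃ w, p.r ω₁ w ∧ q.r ω₂ w ∧ t.r ω w

/-- The conditional independence relation on partitions is a quasi-separoid:
C1–C4. Here `P' ≤ P₂` (paper order: `P₂` finer) means `≡_{P₂} ⊆ ≡_{P'}`. -/
theorem stmt9 {Ω : Type*} (p₁ p₂ p p' : Setoid Ω) :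
    CondIndep p₁ p₂ p₂ ∧
    (CondIndep p₁ p₂ p → CondIndep p₂ p₁ p) ∧
    (CondIndep p₁ p₂ p → (∀ a b : Ω, p₂.r a b → p'.r a b) → CondIndep p₁ p' p) ∧
    (CondIndep p₁ p₂ p → CondIndep p₁ (pjoin p₂ p) p) := by
  refine ⟨?_, ?_, ?_, ?_⟩
  · rintro ω₁ ω₂ ω ⟨u, hu1, hu2⟩ ⟨v, hv1, hv2⟩
    exact ⟨u, hu1, p₂.iseqv.trans hv1 (p₂.iseqv.trans (p₂.iseqv.symm hv2) hu2), hu2⟩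
  · rintro h ω₁ ω₂ ω h1 h2
    obtain ⟨w, hw1, hw2, hw3⟩ := h ω₂ ω₁ ω h2 h1
    exact ⟨w, hw2, hw1, hw3⟩
  · rintro h hle ω₁ ω₂ ω h1 ⟨v, hv1, hv2⟩
    obtain ⟨w, hw1, hw2, hw3⟩ := h ω₁ v ω h1 ⟨v, p₂.iseqv.refl v, hv2⟩
    exact ⟨w, hw1, p'.iseqv.trans hv1 (hle _ _ hw2), hw3⟩
  · rintro h ω₁ ω₂ ω h1 ⟨v, ⟨hv1, hv1'⟩, hv2⟩
    obtain ⟨w, hw1, hw2, hw3⟩ := h ω₁ ω₂ ω h1 ⟨v, hv1, hv2⟩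
    exact ⟨w, hw1, ⟨hw2, p.iseqv.trans hv1' (p.iseqv.trans (p.iseqv.symm hv2) hw3)⟩, hw3⟩
end

section
/- Let x, y, z be partitions of Ω with (x ∨ z) ⊥ (y ∨ z) | z, and let D ∈ Φ satisfy ε_x(D) = D. Then ε_{y∨z}(D) = ε_{y∨z}(ε_z(D)). -/
/-- Combination: `D₁ · D₂ := C(D₁ ∪ D₂)`. -/
def comb {Ω : Type*} (D₁ D₂ : Set (Ω → ℝ)) : Set (Ω → ℝ) := Cl (D₁ ∪ D₂)

/-- Extraction: `ε_x(D) := C(D ∩ L_x)`. -/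
def eps {Ω : Type*} (x : Setoid Ω) (D : Set (Ω → ℝ)) : Set (Ω → ℝ) :=
  Cl (D ∩ Lx x)

section Aux
variable {Ω : Type*}

lemma Cl_mono {A B : Set (Ω → ℝ)} (h : A ⊆ B) : Cl A ⊆ Cl B :=
  fun f hf E hE => hf E ⟨hE.1, h.trans hE.2⟩

lemma subset_Cl {A : Set (Ω → ℝ)} : A ⊆ Cl A := fun f hf E hE => hE.2 hf

lemma Lpos_subset_of_Phi {E : Set (Ω → ℝ)} (hE : E ∈ Phi Ω) : Lpos Ω ⊆ E := by
  rcases hE with h | h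
  · exact h.2.1
  · rw [Set.mem_singleton_iff] at h; subst h; exact fun f hf => hf.1

lemma Lpos_add {f g : Ω → ℝ} (hf : f ∈ Lpos Ω) (hg : g ∈ Lpos Ω) : f + g ∈ Lpos Ω := by
  obtain ⟨⟨M, hM⟩, hf0, hfne⟩ := hf
  obtain ⟨⟨N, hN⟩, hg0, _⟩ := hg
  refine ⟨⟨M + N, fun ω => (abs_add_le _ _).trans (add_le_add (hM ω) (hN ω))⟩,
    fun ω => add_nonneg (hf0 ω) (hg0 ω), ?_⟩
  obtain ⟨ω, hω⟩ := Function.ne_iff.mp hfne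
  have : 0 < f ω := lt_of_le_of_ne (hf0 ω) (Ne.symm hω)
  intro h0
  have := congrFun h0 ω
  simp only [Pi.add_apply, Pi.zero_apply] at this
  have hg' : (0:ℝ) ≤ g ω := hg0 ω
  nlinarith

lemma Lpos_smul {c : ℝ} {f : Ω → ℝ} (hc : 0 < c) (hf : f ∈ Lpos Ω) : c • f ∈ Lpos Ω := by
  obtain ⟨⟨M, hM⟩, hf0, hfne⟩ := hf
  refine ⟨⟨c * M, fun ω => ?_⟩, fun ω => mul_nonneg hc.le (hf0 ω), ?_⟩
  · simp only [Pi.smul_apply, smul_eq_mul, abs_mul, abs_of_pos hc]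
    exact mul_le_mul_of_nonneg_left (hM ω) hc.le
  · intro h0
    apply hfne
    funext ω
    have := congrFun h0 ω
    simp only [Pi.smul_apply, smul_eq_mul, Pi.zero_apply] at this
    have := (mul_eq_zero.mp this).resolve_left (ne_of_gt hc)
    simpa using this

/-- Positive cone generated by a set of gambles. -/
inductive ConeC (A : Set (Ω → ℝ)) : (Ω → ℝ) → Prop
  | base {f} : f ∈ A → ConeC A f
  | add {f g} : ConeC A f → ConeC A g → ConeC A (f + g)
  | smul {c : ℝ} {f} : 0 < c → ConeC A f → ConeC A (c • f)

lemma ConeC_subset {A D : Set (Ω → ℝ)} (hD : Coherent D) (hAD : A ⊆ D) :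
    ∀ f, ConeC A f → f ∈ D := by
  intro f hf
  induction hf with
  | base h => exact hAD h
  | add _ _ ih1 ih2 => exact hD.2.2.2.1 _ _ ih1 ih2
  | smul hc _ ih => exact hD.2.2.2.2 _ _ ih hc

lemma ConeC_meas {A : Set (Ω → ℝ)} {x : Setoid Ω} (hA : ∀ f ∈ A, Meas x f) :
    ∀ f, ConeC A f → Meas x f := by
  intro f hf
  induction hf with
  | base h => exact hA _ h
  | add _ _ ih1 ih2 => intro a b hab; simp [Pi.add_apply, ih1 a b hab, ih2 a b hab]
  | smul _ _ ih => intro a b hab; simp [Pi.smul_apply, ih a b hab]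

/-- Natural-extension description: members of `Cl A` for `A ⊆ D` coherent are
positive gambles or dominate a cone element. -/
lemma Cl_subset_natext {D A : Set (Ω → ℝ)} (hD : Coherent D) (hAD : A ⊆ D) :
    Cl A ⊆ {f | f ∈ Lpos Ω ∨ ∃ g, ConeC A g ∧ (f = g ∨ f - g ∈ Lpos Ω)} := by
  set E : Set (Ω → ℝ) := {f | f ∈ Lpos Ω ∨ ∃ g, ConeC A g ∧ (f = g ∨ f - g ∈ Lpos Ω)} with hE
  have hED : E ⊆ D := by
    rintro f (hf | ⟨g, hg, hfg | hfg⟩)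
    · exact hD.2.1 hf
    · exact hfg ▸ ConeC_subset hD hAD g hg
    · have : f = g + (f - g) := by ring
      rw [this]
      exact hD.2.2.2.1 _ _ (ConeC_subset hD hAD g hg) (hD.2.1 hfg)
  have hcoh : Coherent E := by
    refine ⟨hED.trans hD.1, fun f hf => Or.inl hf, ?_, ?_, ?_⟩
    · intro h0; exact hD.2.2.1 (hED h0)
    · rintro f g (hf | ⟨gf, hgf, hf⟩) (hg | ⟨gg, hgg, hg⟩)
      · exact Or.inl (Lpos_add hf hg)
      · refine Or.inr ⟨gg, hgg, Or.inr ?_⟩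
        rcases hg with h | h
        · have : f + g - gg = f := by rw [h]; ring
          rwa [this]
        · have : f + g - gg = f + (g - gg) := by ring
          rw [this]; exact Lpos_add hf h
      · refine Or.inr ⟨gf, hgf, Or.inr ?_⟩
        rcases hf with h | h
        · have : f + g - gf = g := by rw [h]; ring
          rwa [this]
        · have : f + g - gf = (f - gf) + g := by ring
          rw [this]; exact Lpos_add h hg
      · refine Or.inr ⟨gf + gg, ConeC.add hgf hgg, ?_⟩
        rcases hf with h1 | h1 <;> rcases hg with h2 | h2
        · exact Or.inl (by rw [h1, h2])
        · refine Or.inr ?_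
          have : f + g - (gf + gg) = g - gg := by rw [h1]; ring
          rwa [this]
        · refine Or.inr ?_
          have : f + g - (gf + gg) = f - gf := by rw [h2]; ring
          rwa [this]
        · refine Or.inr ?_
          have : f + g - (gf + gg) = (f - gf) + (g - gg) := by ring
          rw [this]; exact Lpos_add h1 h2
    · rintro c f (hf | ⟨g, hg, hfg⟩) hc
      · exact Or.inl (Lpos_smul hc hf)
      · refine Or.inr ⟨c • g, ConeC.smul hc hg, ?_⟩
        rcases hfg with h | h
        · exact Or.inl (by rw [h])
        · refine Or.inr ?_
          have : c • f - c • g = c • (f - g) := by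
            funext ω; simp [mul_sub]
          rw [this]; exact Lpos_smul hc h
  intro f hf
  exact hf E ⟨Or.inl hcoh, fun a ha => Or.inr ⟨a, ConeC.base ha, Or.inl rfl⟩⟩

lemma Lz_subset_Lyz {y z : Setoid Ω} : Lx z ⊆ Lx (pjoin y z) := by
  rintro f ⟨hb, hm⟩
  exact ⟨hb, fun a b hab => hm a b hab.2⟩

/-- Key lemma: under the hypotheses, `D ∩ L_{y∨z} ⊆ Cl (D ∩ L_z)`. -/
lemma key {x y z : Setoid Ω} {D : Set (Ω → ℝ)} (hD : D ∈ Phi Ω)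
    (hci : CondIndep (pjoin x z) (pjoin y z) z)
    (hsupp : eps x D = D) :
    D ∩ Lx (pjoin y z) ⊆ Cl (D ∩ Lx z) := by
  rcases hD with hcoh | hL
  swap
  · -- D = L Ω : since 0 ∈ D ∩ Lx z, the only Phi-member containing it is L Ω
    rw [Set.mem_singleton_iff] at hL
    subst hL
    rintro f ⟨hfL, -⟩ E ⟨hE, hsub⟩
    have h0 : (0 : Ω → ℝ) ∈ L Ω ∩ Lx z :=
      ⟨⟨0, fun ω => by simp⟩, ⟨0, fun ω => by simp⟩, fun a b _ => rfl⟩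
    rcases hE with hEcoh | hEL
    · exact absurd (hsub h0) hEcoh.2.2.1
    · rw [Set.mem_singleton_iff] at hEL; subst hEL; exact hfL
  · rintro f ⟨hfD, hfb, hfm⟩
    -- f ∈ D = Cl (D ∩ Lx x)
    have hf' : f ∈ Cl (D ∩ Lx x) := by
      have : f ∈ eps x D := hsupp.symm ▸ hfD
      exact this
    have hnat := Cl_subset_natext hcoh Set.inter_subset_left hf'
    rcases hnat with hfpos | ⟨g, hg, hfg⟩
    · exact fun E hE => Lpos_subset_of_Phi hE.1 hfpos
    · have hgD : g ∈ D := ConeC_subset hcoh Set.inter_subset_left g hg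
      have hgm : Meas x g := ConeC_meas (fun h hh => hh.2.2) g hg
      obtain ⟨M, hM⟩ : Bdd g := (hcoh.1 hgD)
      have hgle : ∀ ω, g ω ≤ f ω := by
        intro ω
        rcases hfg with h | h
        · rw [h]
        · have h0 : (0:ℝ) ≤ f ω - g ω := by
            have := h.2.1 ω
            simpa using this
          linarith
      set e : Ω → ℝ := fun ω => sSup (g '' {ω' | z.r ω ω'}) with he
      have hnonempty : ∀ ω : Ω, (g '' {ω' | z.r ω ω'}).Nonempty :=
        fun ω => ⟨g ω, ω, z.iseqv.refl ω, rfl⟩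
      have hbdd : ∀ ω : Ω, BddAbove (g '' {ω' | z.r ω ω'}) := by
        intro ω
        exact ⟨M, by rintro r ⟨ω', -, rfl⟩; exact (abs_le.mp (hM ω')).2⟩
      have hge : ∀ ω, g ω ≤ e ω := fun ω => le_csSup (hbdd ω) ⟨ω, z.iseqv.refl ω, rfl⟩
      have hef : ∀ ω, e ω ≤ f ω := by
        intro ω
        apply csSup_le (hnonempty ω)
        rintro r ⟨ω', hω', rfl⟩
        obtain ⟨w, hw1, hw2, -⟩ := hci ω' ω ω ⟨ω', (pjoin x z).iseqv.refl ω', hω'⟩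
          ⟨ω, (pjoin y z).iseqv.refl ω, z.iseqv.refl ω⟩
        calc g ω' = g w := hgm ω' w hw1.1
        _ ≤ f w := hgle w
        _ = f ω := (hfm ω w hw2).symm
      have heM : ∀ ω, e ω ≤ M := fun ω =>
        csSup_le (hnonempty ω) (by rintro r ⟨ω', -, rfl⟩; exact (abs_le.mp (hM ω')).2)
      have heb : Bdd e := by
        refine ⟨M, fun ω => abs_le.mpr ⟨le_trans (abs_le.mp (hM ω)).1 (hge ω), heM ω⟩⟩
      have hem : Meas z e := by
        intro a b hab
        have hset : {ω' | z.r a ω'} = {ω' | z.r b ω'} := by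
          ext c
          exact ⟨fun h => z.iseqv.trans (z.iseqv.symm hab) h, fun h => z.iseqv.trans hab h⟩
        simp only [he, hset]
      have hebd : Bdd (e - g) := by
        refine ⟨2 * M, fun ω => ?_⟩
        have h1 : -M ≤ g ω := (abs_le.mp (hM ω)).1
        have h2 : e ω ≤ M := heM ω
        have h3 : g ω ≤ e ω := hge ω
        have : (e - g) ω = e ω - g ω := rfl
        rw [this, abs_of_nonneg (by linarith)]
        linarith
      have heD : e ∈ D := by
        by_cases hcase : e = g
        · rw [hcase]; exact hgD
        · have hrw : e = g + (e - g) := by ring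
          rw [hrw]
          refine hcoh.2.2.2.1 _ _ hgD (hcoh.2.1 ⟨hebd, fun ω => ?_, ?_⟩)
          · have : (0:ℝ) ≤ e ω - g ω := sub_nonneg.mpr (hge ω)
            simpa using this
          · intro h0
            exact hcase (sub_eq_zero.mp h0)
      intro E ⟨hE, hsub⟩
      have heE : e ∈ E := hsub ⟨heD, heb, hem⟩
      by_cases hfe : f = e
      · rw [hfe]; exact heE
      · rcases hE with hEcoh | hEL
        · have hrw : f = e + (f - e) := by ring
          rw [hrw]
          refine hEcoh.2.2.2.1 _ _ heE (hEcoh.2.1 ⟨?_, fun ω => ?_, ?_⟩)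
          · obtain ⟨N, hN⟩ : Bdd f := hcoh.1 hfD
            refine ⟨N + M, fun ω => ?_⟩
            have h1 : -M ≤ g ω := (abs_le.mp (hM ω)).1
            have h2 : g ω ≤ e ω := hge ω
            have h3 : e ω ≤ f ω := hef ω
            have h4 := abs_le.mp (hN ω)
            have : (f - e) ω = f ω - e ω := rfl
            rw [this, abs_of_nonneg (by linarith)]
            linarith
          · have : (0:ℝ) ≤ f ω - e ω := sub_nonneg.mpr (hef ω)
            simpa using this
          · intro h0
            exact hfe (sub_eq_zero.mp h0)
        · rw [Set.mem_singleton_iff] at hEL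
          subst hEL
          exact hcoh.1 hfD
end Aux

/-- Extraction axiom: if `(x∨z) ⊥ (y∨z) | z` and `x` is a support of `D`,
then `ε_{y∨z}(D) = ε_{y∨z}(ε_z(D))`. -/
theorem stmt14 {Ω : Type*} (x y z : Setoid Ω) (D : Set (Ω → ℝ))
    (hD : D ∈ Phi Ω)
    (hci : CondIndep (pjoin x z) (pjoin y z) z)
    (hsupp : eps x D = D) :
    eps (pjoin y z) D = eps (pjoin y z) (eps z D) := by
  apply Set.Subset.antisymm
  · apply Cl_mono
    intro f hf
    exact ⟨key hD hci hsupp hf, hf.2⟩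
  · intro f hf E hE
    apply hf E
    refine ⟨hE.1, ?_⟩
    rintro g ⟨hg1, hg2⟩
    exact hg1 E ⟨hE.1, fun a ha => hE.2 ⟨ha.1, Lz_subset_Lyz ha.2⟩⟩
end

section
/- Let D₁, D₂ ∈ Φ and x, y, z ∈ Q with x ⊥ y | z. If x is a support of D₁ and y is a support of D₂, then ε_z(D₁·D₂) = ε_z(D₁)·ε_z(D₂). -/
namespace Stmt17Aux

variable {Ω : Type*}

lemma bdd_zero : Bdd (0 : Ω → ℝ) := ⟨0, fun ω => by simp⟩

lemma bdd_add {f g : Ω → ℝ} (hf : Bdd f) (hg : Bdd g) : Bdd (f + g) := by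
  obtain ⟨M, hM⟩ := hf; obtain ⟨N, hN⟩ := hg
  exact ⟨M + N, fun ω => by
    have := (abs_add_le (f ω) (g ω)).trans (add_le_add (hM ω) (hN ω)); simpa using this⟩

lemma bdd_neg {f : Ω → ℝ} (hf : Bdd f) : Bdd (-f) := by
  obtain ⟨M, hM⟩ := hf
  exact ⟨M, fun ω => by simpa using hM ω⟩

lemma bdd_sub {f g : Ω → ℝ} (hf : Bdd f) (hg : Bdd g) : Bdd (f - g) := by
  have := bdd_add hf (bdd_neg hg); simpa [sub_eq_add_neg] using this

lemma bdd_smul (c : ℝ) {f : Ω → ℝ} (hf : Bdd f) : Bdd (c • f) := by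
  obtain ⟨M, hM⟩ := hf
  refine ⟨|c| * M, fun ω => ?_⟩
  have : |c • f ω| = |c| * |f ω| := by simp [abs_mul]
  calc |(c • f) ω| = |c| * |f ω| := by simp [abs_mul]
    _ ≤ |c| * M := by
        exact mul_le_mul_of_nonneg_left (hM ω) (abs_nonneg c)

lemma lpos_sub_L : Lpos Ω ⊆ L Ω := fun f hf => hf.1

lemma lx_sub_L (x : Setoid Ω) : Lx x ⊆ L Ω := fun f hf => hf.1

lemma zero_mem_lx (x : Setoid Ω) : (0 : Ω → ℝ) ∈ Lx x :=
  ⟨bdd_zero, fun a b _ => rfl⟩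

lemma L_mem_phi : L Ω ∈ Phi Ω := Or.inr rfl

lemma phi_sub_L {D : Set (Ω → ℝ)} (hD : D ∈ Phi Ω) : D ⊆ L Ω := by
  rcases hD with h | h
  · exact h.1
  · simp only [Set.mem_singleton_iff] at h; exact h ▸ le_refl _

lemma phi_lpos {D : Set (Ω → ℝ)} (hD : D ∈ Phi Ω) : Lpos Ω ⊆ D := by
  rcases hD with h | h
  · exact h.2.1
  · simp only [Set.mem_singleton_iff] at h; exact h ▸ lpos_sub_L

lemma phi_add {D : Set (Ω → ℝ)} (hD : D ∈ Phi Ω) {f g : Ω → ℝ}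
    (hf : f ∈ D) (hg : g ∈ D) : f + g ∈ D := by
  rcases hD with h | h
  · exact h.2.2.2.1 f g hf hg
  · simp only [Set.mem_singleton_iff] at h; subst h; exact bdd_add hf hg

lemma phi_smul {D : Set (Ω → ℝ)} (hD : D ∈ Phi Ω) {c : ℝ} {f : Ω → ℝ}
    (hf : f ∈ D) (hc : 0 < c) : c • f ∈ D := by
  rcases hD with h | h
  · exact h.2.2.2.2 c f hf hc
  · simp only [Set.mem_singleton_iff] at h; subst h; exact bdd_smul c hf

lemma phi_dom {D : Set (Ω → ℝ)} (hD : D ∈ Phi Ω) {f g : Ω → ℝ}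
    (hf : f ∈ D) (hg : Bdd g) (hle : f ≤ g) : g ∈ D := by
  by_cases h : g = f
  · exact h ▸ hf
  · have hfb : Bdd f := phi_sub_L hD hf
    have hpos : g - f ∈ Lpos Ω := by
      refine ⟨bdd_sub hg hfb, fun ω => by simpa using hle ω, ?_⟩
      intro h0
      apply h
      funext ω
      have := congrFun h0 ω
      simp at this
      linarith [this]
    have : f + (g - f) ∈ D := phi_add hD hf (phi_lpos hD hpos)
    simpa using this

lemma subset_cl {A : Set (Ω → ℝ)} : A ⊆ Cl A := by
  intro f hf D hD
  exact hD.2 hf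

lemma cl_subset {A D : Set (Ω → ℝ)} (hD : D ∈ Phi Ω) (hA : A ⊆ D) : Cl A ⊆ D :=
  Set.sInter_subset_of_mem ⟨hD, hA⟩

lemma cl_sub_L {A : Set (Ω → ℝ)} (hA : A ⊆ L Ω) : Cl A ⊆ L Ω :=
  cl_subset L_mem_phi hA

lemma cl_mono {A B : Set (Ω → ℝ)} (h : A ⊆ B) : Cl A ⊆ Cl B := by
  intro f hf D hD
  exact hf D ⟨hD.1, h.trans hD.2⟩

lemma cl_eq_top {A : Set (Ω → ℝ)} (hA : A ⊆ L Ω)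
    (h : ∀ D, Coherent D → ¬ A ⊆ D) : Cl A = L Ω := by
  refine le_antisymm (cl_sub_L hA) ?_
  intro f hf D hD
  rcases hD.1 with hc | hl
  · exact absurd hD.2 (h D hc)
  · simp only [Set.mem_singleton_iff] at hl; exact hl ▸ hf

lemma cl_mem_phi {A : Set (Ω → ℝ)} (hA : A ⊆ L Ω) : Cl A ∈ Phi Ω := by
  by_cases hc : ∃ D, Coherent D ∧ A ⊆ D
  · obtain ⟨D, hD, hAD⟩ := hc
    left
    refine ⟨cl_sub_L hA, ?_, ?_, ?_, ?_⟩
    · intro f hf E hE; exact phi_lpos hE.1 hf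
    · intro h0
      exact hD.2.2.1 (cl_subset (Or.inl hD) hAD h0)
    · intro f g hf hg E hE
      exact phi_add hE.1 (hf E hE) (hg E hE)
    · intro c f hf hcpos E hE
      exact phi_smul hE.1 (hf E hE) hcpos
  · push_neg at hc
    right
    simp only [Set.mem_singleton_iff]
    exact cl_eq_top hA (fun D hD => hc D hD)

end Stmt17Aux
namespace Stmt17Aux

variable {Ω : Type*}

/-- Supremum of `g` over the `z`-block of `ω`. -/
noncomputable def sblock (z : Setoid Ω) (g : Ω → ℝ) (ω : Ω) : ℝ :=
  sSup (g '' {ω' | z.r ω ω'})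

lemma sblock_bddAbove {z : Setoid Ω} {g : Ω → ℝ} (hg : Bdd g) (ω : Ω) :
    BddAbove (g '' {ω' | z.r ω ω'}) := by
  obtain ⟨M, hM⟩ := hg
  exact ⟨M, fun b ⟨ω', _, hb⟩ => hb ▸ (abs_le.mp (hM ω')).2⟩

lemma sblock_ne {z : Setoid Ω} {g : Ω → ℝ} (ω : Ω) :
    (g '' {ω' | z.r ω ω'}).Nonempty :=
  ⟨g ω, ω, z.iseqv.refl ω, rfl⟩

lemma le_sblock {z : Setoid Ω} {g : Ω → ℝ} (hg : Bdd g) {ω ω' : Ω}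
    (h : z.r ω ω') : g ω' ≤ sblock z g ω :=
  le_csSup (sblock_bddAbove hg ω) ⟨ω', h, rfl⟩

lemma self_le_sblock {z : Setoid Ω} {g : Ω → ℝ} (hg : Bdd g) :
    g ≤ sblock z g :=
  fun ω => le_sblock hg (z.iseqv.refl ω)

lemma sblock_le {z : Setoid Ω} {g : Ω → ℝ} {ω : Ω} {c : ℝ}
    (h : ∀ ω', z.r ω ω' → g ω' ≤ c) : sblock z g ω ≤ c :=
  csSup_le (sblock_ne ω) (fun b ⟨ω', hω', hb⟩ => hb ▸ h ω' hω')

lemma sblock_bdd {z : Setoid Ω} {g : Ω → ℝ} (hg : Bdd g) :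
    Bdd (sblock z g) := by
  obtain ⟨M, hM⟩ := hg
  refine ⟨M, fun ω => abs_le.mpr ⟨?_, ?_⟩⟩
  · exact le_trans (neg_le_of_abs_le (hM ω)) (self_le_sblock ⟨M, hM⟩ ω)
  · exact sblock_le (fun ω' _ => (abs_le.mp (hM ω')).2)

lemma sblock_meas {z : Setoid Ω} (g : Ω → ℝ) : Meas z (sblock z g) := by
  intro a b hab
  unfold sblock
  have hset : {ω' | z.r a ω'} = {ω' | z.r b ω'} := by
    ext ω'
    exact ⟨fun h => z.iseqv.trans (z.iseqv.symm hab) h, fun h => z.iseqv.trans hab h⟩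
  rw [hset]

/-- Decomposition of a member of a coherent set with support `x`. -/
lemma decomp {x : Setoid Ω} {D : Set (Ω → ℝ)} (hD : Coherent D)
    (hs : eps x D = D) {a : Ω → ℝ} (ha : a ∈ D) :
    (∃ a₀ ∈ D ∩ Lx x, a₀ ≤ a) ∨ (0 : Ω → ℝ) ≤ a := by
  -- the natural extension of D ∩ Lx x
  set E : Set (Ω → ℝ) :=
    Lpos Ω ∪ {w | Bdd w ∧ ∃ a₀ ∈ D ∩ Lx x, a₀ ≤ w} with hE
  have hEcoh : Coherent E := by
    refine ⟨?_, ?_, ?_, ?_, ?_⟩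
    · rintro f (hf | hf)
      · exact hf.1
      · exact hf.1
    · exact Set.subset_union_left
    · rintro (h0 | ⟨_, a₀, ⟨ha₀D, _⟩, hle⟩)
      · exact h0.2.2 rfl
      · -- a₀ ≤ 0, a₀ ∈ D: contradiction
        by_cases hz : a₀ = 0
        · exact hD.2.2.1 (hz ▸ ha₀D)
        · have hneg : -a₀ ∈ Lpos Ω := by
            refine ⟨bdd_neg (hD.1 ha₀D), fun ω => by simpa using hle ω, ?_⟩
            intro h; apply hz; have := congrArg Neg.neg h; simpa using this
          have : a₀ + (-a₀) ∈ D := hD.2.2.2.1 _ _ ha₀D (hD.2.1 hneg)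
          simp at this
          exact hD.2.2.1 this
    · rintro f g (hf | ⟨hfb, a₀, ha₀, hle⟩) hg
      · rcases hg with hg | ⟨hgb, b₀, hb₀, hble⟩
        · -- Lpos + Lpos
          left
          refine ⟨bdd_add hf.1 hg.1, fun ω => by
            have := add_le_add (hf.2.1 ω) (hg.2.1 ω); simpa using this, ?_⟩
          intro h
          apply hf.2.2
          funext ω
          have h1 := congrFun h ω
          have h2 := hf.2.1 ω
          have h3 := hg.2.1 ω
          simp at h1 h2 h3 ⊢
          linarith
        · right
          exact ⟨bdd_add hf.1 hgb, b₀, hb₀, fun ω => by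
            have := add_le_add (hf.2.1 ω) (hble ω); simpa [add_comm] using this⟩
      · right
        rcases hg with hg | ⟨hgb, b₀, hb₀, hble⟩
        · exact ⟨bdd_add hfb hg.1, a₀, ha₀, fun ω => by
            have := add_le_add (hle ω) (hg.2.1 ω); simpa using this⟩
        · refine ⟨bdd_add hfb hgb, a₀ + b₀, ?_, fun ω => add_le_add (hle ω) (hble ω)⟩
          exact ⟨hD.2.2.2.1 _ _ ha₀.1 hb₀.1,
            bdd_add ha₀.2.1 hb₀.2.1,
            fun p q hpq => by rw [Pi.add_apply, Pi.add_apply, ha₀.2.2 p q hpq, hb₀.2.2 p q hpq]⟩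
    · rintro c f (hf | ⟨hfb, a₀, ha₀, hle⟩) hc
      · left
        refine ⟨bdd_smul c hf.1, fun ω => by
          have := mul_le_mul_of_nonneg_left (hf.2.1 ω) hc.le; simpa using this, ?_⟩
        intro h
        apply hf.2.2
        funext ω
        have h1 := congrFun h ω
        simp at h1 ⊢
        rcases h1 with h1 | h1
        · linarith
        · exact h1
      · right
        refine ⟨bdd_smul c hfb, c • a₀, ?_, fun ω => by
          have := mul_le_mul_of_nonneg_left (hle ω) hc.le; simpa using this⟩
        exact ⟨hD.2.2.2.2 c a₀ ha₀.1 hc, bdd_smul c ha₀.2.1,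
          fun p q hpq => by simp [ha₀.2.2 p q hpq]⟩
  have hsub : D ∩ Lx x ⊆ E := fun f hf => Or.inr ⟨hD.1 hf.1, f, hf, le_refl f⟩
  have hDE : D ⊆ E := by
    rw [← hs]
    exact cl_subset (Or.inl hEcoh) hsub
  rcases hDE ha with h | ⟨_, a₀, ha₀, hle⟩
  · exact Or.inr h.2.1
  · exact Or.inl ⟨a₀, ha₀, hle⟩

end Stmt17Aux
namespace Stmt17Aux

variable {Ω : Type*}

/-- Single-set extraction lemma. -/
lemma single {x z : Setoid Ω} {D : Set (Ω → ℝ)} (hD : Coherent D) (hs : eps x D = D)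
    (hw : ∀ ω ω' : Ω, z.r ω ω' → ∃ w, x.r ω' w ∧ z.r ω w)
    {u f : Ω → ℝ} (hu : u ∈ D) (hfb : Bdd f) (hfm : Meas z f) (hle : u ≤ f) :
    (∃ u' ∈ D ∩ Lx z, u' ≤ f) ∨ (0 : Ω → ℝ) ≤ u := by
  rcases decomp hD hs hu with ⟨u₀, hu₀, hle₀⟩ | hpos
  · left
    have hu₀b : Bdd u₀ := hD.1 hu₀.1
    refine ⟨sblock z u₀,
      ⟨phi_dom (Or.inl hD) hu₀.1 (sblock_bdd hu₀b) (self_le_sblock hu₀b),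
        sblock_bdd hu₀b, sblock_meas u₀⟩, ?_⟩
    intro ω
    apply sblock_le
    intro ω' hωω'
    obtain ⟨w, hxw, hzw⟩ := hw ω ω' hωω'
    calc u₀ ω' = u₀ w := hu₀.2.2 ω' w hxw
      _ ≤ u w := hle₀ w
      _ ≤ f w := hle w
      _ = f ω := (hfm ω w hzw).symm
  · exact Or.inr hpos

/-- Pair decomposition lemma: the heart of the combination axiom. -/
lemma pair {x y z : Setoid Ω} {D₁ D₂ : Set (Ω → ℝ)} (h₁ : Coherent D₁) (h₂ : Coherent D₂)
    (hs₁ : eps x D₁ = D₁) (hs₂ : eps y D₂ = D₂) (hci : CondIndep x y z)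
    {u v f : Ω → ℝ} (hu : u ∈ D₁) (hv : v ∈ D₂) (hfb : Bdd f) (hfm : Meas z f)
    (hle : u + v ≤ f) :
    (∃ u' ∈ D₁ ∩ Lx z, ∃ v' ∈ D₂ ∩ Lx z, f = u' + v') ∨
      (0 : Ω → ℝ) ≤ u ∨ (0 : Ω → ℝ) ≤ v := by
  rcases decomp h₁ hs₁ hu with ⟨u₀, hu₀, hleu⟩ | hp
  · rcases decomp h₂ hs₂ hv with ⟨v₀, hv₀, hlev⟩ | hq
    · left
      have hu₀b : Bdd u₀ := h₁.1 hu₀.1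
      have huhat : sblock z u₀ ∈ D₁ ∩ Lx z :=
        ⟨phi_dom (Or.inl h₁) hu₀.1 (sblock_bdd hu₀b) (self_le_sblock hu₀b),
          sblock_bdd hu₀b, sblock_meas u₀⟩
      have key : ∀ ω, sblock z u₀ ω ≤ f ω - v₀ ω := by
        intro ω
        apply sblock_le
        intro ω' hωω'
        obtain ⟨w, hxw, hyw, hzw⟩ := hci ω' ω ω
          ⟨ω', x.iseqv.refl ω', hωω'⟩ ⟨ω, y.iseqv.refl ω, z.iseqv.refl ω⟩
        have h1 : u₀ ω' = u₀ w := hu₀.2.2 ω' w hxw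
        have h2 : v₀ ω = v₀ w := hv₀.2.2 ω w hyw
        have h3 : f w = f ω := (hfm ω w hzw).symm
        have h4 := hleu w
        have h5 := hlev w
        have h6 := hle w
        simp only [Pi.add_apply] at h6
        linarith
      have hsubb : Bdd (f - sblock z u₀) := bdd_sub hfb (sblock_bdd hu₀b)
      have hvmem : f - sblock z u₀ ∈ D₂ ∩ Lx z := by
        refine ⟨phi_dom (Or.inl h₂) hv₀.1 hsubb ?_, hsubb, ?_⟩
        · intro ω
          have := key ω
          simp only [Pi.sub_apply]
          linarith
        · intro a b hab
          simp only [Pi.sub_apply, hfm a b hab, sblock_meas u₀ a b hab]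
      exact ⟨sblock z u₀, huhat, f - sblock z u₀, hvmem, by
        funext ω; simp only [Pi.add_apply, Pi.sub_apply]; ring⟩
    · exact Or.inr (Or.inr hq)
  · exact Or.inr (Or.inl hp)

end Stmt17Aux
namespace Stmt17Aux

variable {Ω : Type*}

lemma cl_top {A : Set (Ω → ℝ)} (hA : A ⊆ L Ω) (h0 : (0 : Ω → ℝ) ∈ A) :
    Cl A = L Ω :=
  cl_eq_top hA (fun D hD hsub => hD.2.2.1 (hsub h0))

lemma nonpos_notMem {D : Set (Ω → ℝ)} (hD : Coherent D) {v : Ω → ℝ}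
    (hv : v ∈ D) (hle : v ≤ 0) : False := by
  by_cases hz : v = 0
  · exact hD.2.2.1 (hz ▸ hv)
  · have hneg : -v ∈ Lpos Ω := by
      refine ⟨bdd_neg (hD.1 hv), fun ω => by simpa using hle ω, ?_⟩
      intro h
      exact hz (by simpa [neg_eq_zero] using h)
    have : v + (-v) ∈ D := hD.2.2.2.1 _ _ hv (hD.2.1 hneg)
    simp at this
    exact hD.2.2.1 this

lemma sum_zero_of_nonneg {w w' : Ω → ℝ} (hw : 0 ≤ w) (hw' : 0 ≤ w')
    (h : w + w' = 0) : w = 0 := by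
  funext ω
  have h1 := congrFun h ω
  have h2 := hw ω
  have h3 := hw' ω
  simp only [Pi.add_apply, Pi.zero_apply] at h1 h2 h3 ⊢
  linarith

lemma tag_add {D : Set (Ω → ℝ)} (hD : Coherent D) {a a' : Ω → ℝ}
    (ha : a ∈ D ∨ a = 0) (ha' : a' ∈ D ∨ a' = 0) : a + a' ∈ D ∨ a + a' = 0 := by
  rcases ha with h | h <;> rcases ha' with h' | h'
  · exact Or.inl (hD.2.2.2.1 _ _ h h')
  · subst h'; simpa using Or.inl h
  · subst h; simpa using Or.inl h'
  · subst h; subst h'; simp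

lemma tag_smul {D : Set (Ω → ℝ)} (hD : Coherent D) {c : ℝ} (hc : 0 < c) {a : Ω → ℝ}
    (ha : a ∈ D ∨ a = 0) : c • a ∈ D ∨ c • a = 0 := by
  rcases ha with h | h
  · exact Or.inl (hD.2.2.2.2 c a h hc)
  · subst h; simp

lemma tag_eq_zero {D D' : Set (Ω → ℝ)} (hD : Coherent D) (hD' : Coherent D')
    (hdeg : ¬ ∃ u ∈ D, ∃ v ∈ D', u + v = (0 : Ω → ℝ))
    {a a' : Ω → ℝ} (ha : a ∈ D ∨ a = 0) (ha' : a' ∈ D' ∨ a' = 0)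
    (h : a + a' = 0) : a = 0 ∧ a' = 0 := by
  rcases ha with h1 | h1 <;> rcases ha' with h2 | h2
  · exact absurd ⟨a, h1, a', h2, h⟩ hdeg
  · subst h2; simp at h; exact absurd (h ▸ h1) hD.2.2.1
  · subst h1; simp at h; exact absurd (h ▸ h2) hD'.2.2.1
  · exact ⟨h1, h2⟩

end Stmt17Aux
namespace Stmt17Aux

variable {Ω : Type*}

/-- Tagged natural extension of `D₁ ∪ D₂`. -/
def NE (D₁ D₂ : Set (Ω → ℝ)) : Set (Ω → ℝ) :=
  {w | Bdd w ∧ ∃ a b : Ω → ℝ, (a ∈ D₁ ∨ a = 0) ∧ (b ∈ D₂ ∨ b = 0) ∧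
      a + b ≤ w ∧ (a = 0 → b = 0 → w ≠ 0)}

lemma subset_NE_left {D₁ D₂ : Set (Ω → ℝ)} (h₁ : Coherent D₁) :
    D₁ ⊆ NE D₁ D₂ := by
  intro f hf
  refine ⟨h₁.1 hf, f, 0, Or.inl hf, Or.inr rfl, by simp, ?_⟩
  intro h0 _
  exact absurd (h0 ▸ hf) h₁.2.2.1

lemma subset_NE_right {D₁ D₂ : Set (Ω → ℝ)} (h₂ : Coherent D₂) :
    D₂ ⊆ NE D₁ D₂ := by
  intro f hf
  refine ⟨h₂.1 hf, 0, f, Or.inr rfl, Or.inl hf, by simp, ?_⟩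
  intro _ h0
  exact absurd (h0 ▸ hf) h₂.2.2.1

lemma coherent_NE {D₁ D₂ : Set (Ω → ℝ)} (h₁ : Coherent D₁) (h₂ : Coherent D₂)
    (hdeg : ¬ ∃ u ∈ D₁, ∃ v ∈ D₂, u + v = (0 : Ω → ℝ)) :
    Coherent (NE D₁ D₂) := by
  refine ⟨fun f hf => hf.1, ?_, ?_, ?_, ?_⟩
  · -- Lpos ⊆ NE
    intro f hf
    exact ⟨hf.1, 0, 0, Or.inr rfl, Or.inr rfl, by simpa using hf.2.1, fun _ _ => hf.2.2⟩
  · -- 0 ∉ NE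
    rintro ⟨_, a, b, ta, tb, hab, hne⟩
    rcases ta with ha | ha
    · rcases tb with hb | hb
      · -- a ∈ D₁, b ∈ D₂, a + b ≤ 0
        have hnb : -a ∈ D₂ := by
          apply phi_dom (Or.inl h₂) hb (bdd_neg (h₁.1 ha))
          intro ω
          have := hab ω
          simp only [Pi.add_apply, Pi.zero_apply] at this
          simp only [Pi.neg_apply]
          linarith
        exact hdeg ⟨a, ha, -a, hnb, by simp⟩
      · subst hb
        exact nonpos_notMem h₁ ha (by simpa using hab)
    · subst ha
      rcases tb with hb | hb
      · exact nonpos_notMem h₂ hb (by simpa using hab)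
      · subst hb
        exact hne rfl rfl (by simpa using rfl)
  · -- closed under addition
    rintro f g ⟨hfb, a, b, ta, tb, hab, hne⟩ ⟨hgb, a', b', ta', tb', hab', hne'⟩
    refine ⟨bdd_add hfb hgb, a + a', b + b', tag_add h₁ ta ta', tag_add h₂ tb tb', ?_, ?_⟩
    · intro ω
      have h1 := hab ω
      have h2 := hab' ω
      simp only [Pi.add_apply] at h1 h2 ⊢
      linarith
    · intro hA hB h0
      have hdeg1 : ¬ ∃ u ∈ D₁, ∃ v ∈ D₁, u + v = (0 : Ω → ℝ) := by
        rintro ⟨u, hu, v, hv, huv⟩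
        exact absurd (huv ▸ h₁.2.2.2.1 u v hu hv) h₁.2.2.1
      have hdeg2 : ¬ ∃ u ∈ D₂, ∃ v ∈ D₂, u + v = (0 : Ω → ℝ) := by
        rintro ⟨u, hu, v, hv, huv⟩
        exact absurd (huv ▸ h₂.2.2.2.1 u v hu hv) h₂.2.2.1
      obtain ⟨ha0, ha'0⟩ := tag_eq_zero h₁ h₁ hdeg1 ta ta' hA
      obtain ⟨hb0, hb'0⟩ := tag_eq_zero h₂ h₂ hdeg2 tb tb' hB
      have hf0 : 0 ≤ f := by
        intro ω; have := hab ω; rw [ha0, hb0] at this; simpa using this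
      have hg0 : 0 ≤ g := by
        intro ω; have := hab' ω; rw [ha'0, hb'0] at this; simpa using this
      exact hne ha0 hb0 (sum_zero_of_nonneg hf0 hg0 h0)
  · -- closed under positive scaling
    rintro c f ⟨hfb, a, b, ta, tb, hab, hne⟩ hc
    refine ⟨bdd_smul c hfb, c • a, c • b, tag_smul h₁ hc ta, tag_smul h₂ hc tb, ?_, ?_⟩
    · intro ω
      have h1 := hab ω
      simp only [Pi.add_apply, Pi.smul_apply, smul_eq_mul] at h1 ⊢
      nlinarith
    · intro hA hB h0
      have hcne : c ≠ 0 := ne_of_gt hc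
      have ha0 : a = 0 := by
        have := smul_eq_zero.mp hA
        tauto
      have hb0 : b = 0 := by
        have := smul_eq_zero.mp hB
        tauto
      have hf0 : f = 0 := by
        have := smul_eq_zero.mp h0
        tauto
      exact hne ha0 hb0 hf0

end Stmt17Aux
open Stmt17Aux in
/-- If `x ⊥ y | z`, `x` is a support of `D₁` and `y` of `D₂`, then
`ε_z(D₁·D₂) = ε_z(D₁)·ε_z(D₂)`. -/
theorem stmt17 {Ω : Type*} (x y z : Setoid Ω) (D₁ D₂ : Set (Ω → ℝ))
    (h₁ : D₁ ∈ Phi Ω) (h₂ : D₂ ∈ Phi Ω)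
    (hci : CondIndep x y z)
    (hs₁ : eps x D₁ = D₁) (hs₂ : eps y D₂ = D₂) :
    eps z (comb D₁ D₂) = comb (eps z D₁) (eps z D₂) := by
  classical
  have hD1L : D₁ ⊆ L Ω := phi_sub_L h₁
  have hD2L : D₂ ⊆ L Ω := phi_sub_L h₂
  have hE1L : eps z D₁ ⊆ L Ω := cl_sub_L (fun g hg => hg.2.1)
  have hE2L : eps z D₂ ⊆ L Ω := cl_sub_L (fun g hg => hg.2.1)
  have hUE : eps z D₁ ∪ eps z D₂ ⊆ L Ω := Set.union_subset hE1L hE2L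
  have hLHSphi : eps z (comb D₁ D₂) ∈ Phi Ω := cl_mem_phi (fun g hg => hg.2.1)
  have hRHSphi : comb (eps z D₁) (eps z D₂) ∈ Phi Ω := cl_mem_phi hUE
  have hsup : comb (eps z D₁) (eps z D₂) ⊆ eps z (comb D₁ D₂) := by
    apply cl_subset hLHSphi
    have ha : D₁ ∩ Lx z ⊆ comb D₁ D₂ ∩ Lx z :=
      fun g hg => ⟨subset_cl (Or.inl hg.1), hg.2⟩
    have hb : D₂ ∩ Lx z ⊆ comb D₁ D₂ ∩ Lx z :=
      fun g hg => ⟨subset_cl (Or.inr hg.1), hg.2⟩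
    rintro f (hf | hf)
    · exact cl_mono ha hf
    · exact cl_mono hb hf
  have hztop : eps z (L Ω) = L Ω :=
    cl_top Set.inter_subset_left ⟨bdd_zero, zero_mem_lx z⟩
  rcases h₁ with h₁c | h₁t
  swap
  · rw [Set.mem_singleton_iff] at h₁t
    subst h₁t
    have hc : comb (L Ω) D₂ = L Ω :=
      cl_top (Set.union_subset (fun g hg => hg) hD2L) (Or.inl bdd_zero)
    have hr : comb (eps z (L Ω)) (eps z D₂) = L Ω := by
      rw [hztop]
      exact cl_top (Set.union_subset (fun g hg => hg) hE2L) (Or.inl bdd_zero)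
    rw [hc, hr, hztop]
  rcases h₂ with h₂c | h₂t
  swap
  · rw [Set.mem_singleton_iff] at h₂t
    subst h₂t
    have hc : comb D₁ (L Ω) = L Ω :=
      cl_top (Set.union_subset hD1L (fun g hg => hg)) (Or.inr bdd_zero)
    have hr : comb (eps z D₁) (eps z (L Ω)) = L Ω := by
      rw [hztop]
      exact cl_top (Set.union_subset hE1L (fun g hg => hg)) (Or.inr bdd_zero)
    rw [hc, hr, hztop]
  by_cases hdeg : ∃ u ∈ D₁, ∃ v ∈ D₂, u + v = (0 : Ω → ℝ)
  · -- degenerate case: both sides are `L Ω`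
    obtain ⟨u, hu, v, hv, huv⟩ := hdeg
    have hcomb : comb D₁ D₂ = L Ω := by
      apply cl_eq_top (Set.union_subset hD1L hD2L)
      intro D hD hsub
      have : u + v ∈ D := hD.2.2.2.1 u v (hsub (Or.inl hu)) (hsub (Or.inr hv))
      rw [huv] at this
      exact hD.2.2.1 this
    have hLHS : eps z (comb D₁ D₂) = L Ω := by rw [hcomb]; exact hztop
    have hpair := pair h₁c h₂c hs₁ hs₂ hci hu hv bdd_zero
      (fun a b _ => rfl) (le_of_eq huv)
    rcases hpair with ⟨u', hu', v', hv', heq⟩ | hp | hq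
    · have hRHS : comb (eps z D₁) (eps z D₂) = L Ω := by
        apply cl_eq_top hUE
        intro D hD hsub
        have : u' + v' ∈ D :=
          hD.2.2.2.1 u' v' (hsub (Or.inl (subset_cl hu'))) (hsub (Or.inr (subset_cl hv')))
        rw [← heq] at this
        exact hD.2.2.1 this
      rw [hLHS, hRHS]
    · exfalso
      apply nonpos_notMem h₂c hv
      intro ω
      have h1 := congrFun huv ω
      have h2 := hp ω
      simp only [Pi.add_apply, Pi.zero_apply] at h1 h2 ⊢
      linarith
    · exfalso
      apply nonpos_notMem h₁c hu
      intro ω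
      have h1 := congrFun huv ω
      have h2 := hq ω
      simp only [Pi.add_apply, Pi.zero_apply] at h1 h2 ⊢
      linarith
  · -- nondegenerate case
    have hNE : Coherent (NE D₁ D₂) := coherent_NE h₁c h₂c hdeg
    have hcombNE : comb D₁ D₂ ⊆ NE D₁ D₂ :=
      cl_subset (Or.inl hNE)
        (Set.union_subset (subset_NE_left h₁c) (subset_NE_right h₂c))
    have hwx : ∀ ω ω' : Ω, z.r ω ω' → ∃ w, x.r ω' w ∧ z.r ω w := by
      intro ω ω' h
      obtain ⟨w, hw1, _, hw3⟩ := hci ω' ω ω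
        ⟨ω', x.iseqv.refl ω', h⟩ ⟨ω, y.iseqv.refl ω, z.iseqv.refl ω⟩
      exact ⟨w, hw1, hw3⟩
    have hwy : ∀ ω ω' : Ω, z.r ω ω' → ∃ w, y.r ω' w ∧ z.r ω w := by
      intro ω ω' h
      obtain ⟨w, _, hw2, hw3⟩ := hci ω ω' ω
        ⟨ω, x.iseqv.refl ω, z.iseqv.refl ω⟩ ⟨ω', y.iseqv.refl ω', h⟩
      exact ⟨w, hw2, hw3⟩
    have hmem1 : D₁ ∩ Lx z ⊆ comb (eps z D₁) (eps z D₂) :=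
      fun g hg => subset_cl (Or.inl (subset_cl hg))
    have hmem2 : D₂ ∩ Lx z ⊆ comb (eps z D₁) (eps z D₂) :=
      fun g hg => subset_cl (Or.inr (subset_cl hg))
    refine Set.Subset.antisymm ?_ hsup
    apply cl_subset hRHSphi
    rintro f ⟨hfc, hfb, hfm⟩
    obtain ⟨hfb', a, b, ta, tb, hab, hne⟩ := hcombNE hfc
    have hposcase : (0 : Ω → ℝ) ≤ a → (0 : Ω → ℝ) ≤ b → f ∈ comb (eps z D₁) (eps z D₂) := by
      intro hpa hpb
      have hf0 : (0 : Ω → ℝ) ≤ f := by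
        intro ω
        have h1 := hab ω
        have h2 := hpa ω
        have h3 := hpb ω
        simp only [Pi.add_apply, Pi.zero_apply] at h1 h2 h3 ⊢
        linarith
      have hfne : f ≠ 0 := by
        intro h0
        exact hNE.2.2.1 (h0 ▸ hcombNE hfc)
      exact phi_lpos hRHSphi ⟨hfb, hf0, hfne⟩
    rcases ta with haD | ha0
    · rcases tb with hbD | hb0
      · -- a ∈ D₁, b ∈ D₂
        rcases pair h₁c h₂c hs₁ hs₂ hci haD hbD hfb hfm hab with
          ⟨u', hu', v', hv', heq⟩ | hpa | hpb
        · rw [heq]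
          exact phi_add hRHSphi (hmem1 hu') (hmem2 hv')
        · have hble : b ≤ f := by
            intro ω
            have h1 := hab ω
            have h2 := hpa ω
            simp only [Pi.add_apply, Pi.zero_apply] at h1 h2 ⊢
            linarith
          rcases single h₂c hs₂ hwy hbD hfb hfm hble with ⟨v', hv', hvle⟩ | hpb
          · exact phi_dom hRHSphi (hmem2 hv') hfb hvle
          · exact hposcase hpa hpb
        · have hale : a ≤ f := by
            intro ω
            have h1 := hab ω
            have h2 := hpb ω
            simp only [Pi.add_apply, Pi.zero_apply] at h1 h2 ⊢
            linarith
          rcases single h₁c hs₁ hwx haD hfb hfm hale with ⟨u', hu', hule⟩ | hpa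
          · exact phi_dom hRHSphi (hmem1 hu') hfb hule
          · exact hposcase hpa hpb
      · -- a ∈ D₁, b = 0
        subst hb0
        have hale : a ≤ f := by
          intro ω
          have h1 := hab ω
          simp only [Pi.add_apply, Pi.zero_apply] at h1 ⊢
          linarith
        rcases single h₁c hs₁ hwx haD hfb hfm hale with ⟨u', hu', hule⟩ | hpa
        · exact phi_dom hRHSphi (hmem1 hu') hfb hule
        · exact hposcase hpa (le_refl 0)
    · subst ha0
      rcases tb with hbD | hb0
      · have hble : b ≤ f := by
          intro ω
          have h1 := hab ω
          simp only [Pi.add_apply, Pi.zero_apply] at h1 ⊢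
          linarith
        rcases single h₂c hs₂ hwy hbD hfb hfm hble with ⟨v', hv', hvle⟩ | hpb
        · exact phi_dom hRHSphi (hmem2 hv') hfb hvle
        · exact hposcase (le_refl 0) hpb
      · subst hb0
        exact hposcase (le_refl 0) (le_refl 0)
end
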